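/- Let N ∈ ℕ, m₀ > 0, and let Φ : ℝ → [0,∞) be continuous with support contained in (-1,0) and ∫_ℝ Φ = 1; set Φ_{m₀}(x) = (1/m₀)·Φ(x/m₀) and, for continuous f : ℝ → [0,∞), R^N_{m₀}(f) := ∫_0^{m₀} Φ_{m₀}(-m) · R^{m,N}(f) dm. Then the map f ↦ R^N_{m₀}(f) is continuous with respect to uniform convergence on [-N,N]: if fₖ, f : ℝ → [0,∞) are continuous and fₖ → f uniformly on [-N,N], then R^N_{m₀}(fₖ) → R^N_{m₀}(f). -/

import Mathlib

/-!
`m ↦ R^{m,N}(f)` is antitone, hence continuous at almost every `m`, and at such an `m > 0`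
uniform convergence of the tail integrals `x ↦ ∫_x^N fₖ` on `[-N, N]` squeezes `R^{m,N}(fₖ)`
between `R^{m+δ,N}(f)` and `R^{m-δ,N}(f)` for large `k`. The upper bound needs that a point
whose tail mass strictly exceeds `m - δ` lies below `R^{m-δ,N}(f)` even where `f` vanishes:
this comes from the first point after it where `f` turns positive. Dominated convergence, with
the bound `|Φ_{m₀}(-m)| · N`, then carries the pointwise limit through the integral.
-/

open MeasureTheory

/-- The approximating right wavefront marker
`R^{m,N}(f) = sup{ x ∈ [-N,N] : f(x) > 0 and ∫_x^N f ≥ m }`, with the convention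
`sup ∅ = -N` (realized by inserting `-N` into the set). -/
noncomputable def RmN (N : ℕ) (f : ℝ → ℝ) (m : ℝ) : ℝ :=
  sSup (insert (-(N : ℝ))
    {x : ℝ | x ∈ Set.Icc (-(N : ℝ)) (N : ℝ) ∧ 0 < f x ∧ m ≤ ∫ y in x..(N : ℝ), f y})

/-- The mollified wavefront marker
`R^N_{m₀}(f) = ∫_0^{m₀} Φ_{m₀}(-m) · R^{m,N}(f) dm`, where `Φ_{m₀}(x) = (1/m₀)Φ(x/m₀)`. -/
noncomputable def RNmoll (N : ℕ) (Φ : ℝ → ℝ) (m₀ : ℝ) (f : ℝ → ℝ) : ℝ :=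
  ∫ m in (0:ℝ)..m₀, (1 / m₀) * Φ (-m / m₀) * RmN N f m

open Set Filter Topology Interval

lemma intervalIntegral_le_of_nonpos_on_Ioo {f : ℝ → ℝ} {a b c : ℝ} (hab : a ≤ b)
    (hf_ab : IntervalIntegrable f volume a b) (hf_bc : IntervalIntegrable f volume b c)
    (hf : ∀ x ∈ Ioo a b, f x ≤ 0) :
    ∫ y in a..c, f y ≤ ∫ y in b..c, f y := by
  have h : ∫ y in a..b, f y ≤ ∫ _ in a..b, (0 : ℝ) :=
    intervalIntegral.integral_mono_on_of_le_Ioo hab hf_ab intervalIntegrable_const hf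
  rw [← intervalIntegral.integral_add_adjacent_intervals hf_ab hf_bc]
  simp only [intervalIntegral.integral_zero] at h
  linarith

lemma abs_intervalIntegral_sub_le {f g : ℝ → ℝ} {a b θ : ℝ} (hab : a ≤ b)
    (hf : IntervalIntegrable f volume a b) (hg : IntervalIntegrable g volume a b)
    (hfg : ∀ x ∈ Ioc a b, |f x - g x| ≤ θ) :
    |(∫ y in a..b, f y) - ∫ y in a..b, g y| ≤ θ * (b - a) := by
  rw [← intervalIntegral.integral_sub hf hg, ← abs_of_nonneg (sub_nonneg.2 hab)]
  exact intervalIntegral.norm_integral_le_of_norm_le_const (f := fun y => f y - g y) fun x hx =>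
    hfg x (uIoc_of_le hab ▸ hx)

lemma TendstoUniformlyOn.intervalIntegral_tail {ι : Type*} {l : Filter ι} {F : ι → ℝ → ℝ}
    {f : ℝ → ℝ} {a b : ℝ} (hF : ∀ i, IntervalIntegrable (F i) volume a b)
    (hf : IntervalIntegrable f volume a b) (h : TendstoUniformlyOn F f l (Icc a b)) :
    TendstoUniformlyOn (fun i x => ∫ y in x..b, F i y) (fun x => ∫ y in x..b, f y) l
      (Icc a b) := by
  rw [Metric.tendstoUniformlyOn_iff] at h ⊢
  intro ε hε
  set θ := ε / (|b - a| + 1)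
  have hθ : 0 < θ := by positivity
  have hθε : θ * |b - a| < ε := by
    rw [div_mul_eq_mul_div, div_lt_iff₀ (by positivity)]
    nlinarith
  filter_upwards [h θ hθ] with i hi x hx
  have hsub : uIcc x b ⊆ uIcc a b := uIcc_subset_uIcc_right (Icc_subset_uIcc hx)
  calc dist (∫ y in x..b, f y) (∫ y in x..b, F i y)
      ≤ θ * (b - x) :=
        abs_intervalIntegral_sub_le hx.2 (hf.mono_set hsub) ((hF i).mono_set hsub)
          fun y hy => (hi y ⟨hx.1.trans hy.1.le, hy.2⟩).le
    _ ≤ θ * |b - a| := by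
        gcongr
        exact (sub_le_sub_left hx.1 b).trans (le_abs_self _)
    _ < ε := hθε

def markerSet (N : ℕ) (f : ℝ → ℝ) (m : ℝ) : Set ℝ :=
  {x | x ∈ Icc (-(N : ℝ)) N ∧ 0 < f x ∧ m ≤ ∫ y in x..(N : ℝ), f y}

section Marker

variable {N : ℕ} {f g : ℝ → ℝ} {m m' : ℝ}

lemma RmN_eq_sSup : RmN N f m = sSup (insert (-(N : ℝ)) (markerSet N f m)) := rfl

lemma bddAbove_insert_markerSet : BddAbove (insert (-(N : ℝ)) (markerSet N f m)) := by
  refine ⟨N, ?_⟩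
  rintro x (rfl | hx)
  · simp
  · exact hx.1.2

lemma le_RmN_of_mem_markerSet {x : ℝ} (hx : x ∈ markerSet N f m) : x ≤ RmN N f m :=
  le_csSup bddAbove_insert_markerSet (mem_insert_of_mem _ hx)

lemma neg_le_RmN : -(N : ℝ) ≤ RmN N f m :=
  le_csSup bddAbove_insert_markerSet (mem_insert _ _)

lemma RmN_le_of_forall_le {b : ℝ} (hN : -(N : ℝ) ≤ b) (h : ∀ x ∈ markerSet N f m, x ≤ b) :
    RmN N f m ≤ b :=
  csSup_le (insert_nonempty _ _) (forall_mem_insert.2 ⟨hN, h⟩)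

lemma abs_RmN_le : |RmN N f m| ≤ N :=
  abs_le.2 ⟨neg_le_RmN, RmN_le_of_forall_le (by simp) fun _ hx => hx.1.2⟩

lemma antitone_RmN : Antitone (RmN N f) := fun _ _ h =>
  csSup_le_csSup bddAbove_insert_markerSet (insert_nonempty _ _)
    (insert_subset_insert fun _ hx => ⟨hx.1, hx.2.1, h.trans hx.2.2⟩)

/-- `f ≤ 0` between `x` and the first point `z₀` after `x` where `f` is positive, so the tail mass
from `z₀` still exceeds `m`; by continuity of the tail integral, so does the tail mass from the
points of positivity just after `z₀`. -/
lemma le_RmN_of_lt_integral (hf : Continuous f) (hm : 0 < m) {x : ℝ}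
    (hx : x ∈ Icc (-(N : ℝ)) N) (hint : m < ∫ y in x..(N : ℝ), f y) : x ≤ RmN N f m := by
  set P := {z | z ∈ Icc x (N : ℝ) ∧ 0 < f z}
  have hP_bdd : BddBelow P := ⟨x, fun z hz => hz.1.1⟩
  have tail_le {z : ℝ} (hxz : x ≤ z) (hzero : ∀ y ∈ Ioo x z, f y ≤ 0) :
      ∫ y in x..(N : ℝ), f y ≤ ∫ y in z..(N : ℝ), f y :=
    intervalIntegral_le_of_nonpos_on_Ioo hxz (hf.intervalIntegrable _ _)
      (hf.intervalIntegrable _ _) hzero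
  have hP_ne : P.Nonempty := by
    by_contra hP
    have := tail_le hx.2 fun y hy => not_lt.1 fun hpos =>
      hP ⟨y, ⟨hy.1.le, hy.2.le⟩, hpos⟩
    simp only [intervalIntegral.integral_same] at this
    linarith
  set z₀ := sInf P
  have hxz₀ : x ≤ z₀ := le_csInf hP_ne fun z hz => hz.1.1
  have hz₀N : z₀ ≤ N := (csInf_le hP_bdd hP_ne.some_mem).trans hP_ne.some_mem.1.2
  have hz₀ : m < ∫ y in z₀..(N : ℝ), f y := hint.trans_le <| tail_le hxz₀ fun y hy =>
    not_lt.1 fun hpos => (csInf_le hP_bdd ⟨⟨hy.1.le, hy.2.le.trans hz₀N⟩, hpos⟩).not_gt hy.2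
  have hcont : Continuous fun z => ∫ y in z..(N : ℝ), f y := by
    simpa only [intervalIntegral.integral_symm (N : ℝ)] using
      (intervalIntegral.continuous_primitive (fun a b => hf.intervalIntegrable a b) N).fun_neg
  obtain ⟨u, hz₀u, hu⟩ := exists_Ico_subset_of_mem_nhds
    (continuousAt_const.eventually_lt hcont.continuousAt hz₀) (exists_gt z₀)
  obtain ⟨z, hzP, hzu⟩ := exists_lt_of_csInf_lt hP_ne hz₀u
  have hz₀z : z₀ ≤ z := csInf_le hP_bdd hzP
  calc x ≤ z := hxz₀.trans hz₀z
    _ ≤ RmN N f m := le_RmN_of_mem_markerSet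
        ⟨⟨hx.1.trans (hxz₀.trans hz₀z), hzP.1.2⟩, hzP.2, (hu ⟨hz₀z, hzu⟩).le⟩

lemma RmN_le_RmN_of_integral_lt (hf : Continuous f) (hm' : 0 < m')
    (h : ∀ x ∈ Icc (-(N : ℝ)) N, ∫ y in x..(N : ℝ), g y < (∫ y in x..(N : ℝ), f y) + (m - m')) :
    RmN N g m ≤ RmN N f m' :=
  RmN_le_of_forall_le neg_le_RmN fun x hx =>
    le_RmN_of_lt_integral hf hm' hx.1 (by linarith [h x hx.1, hx.2.2])

lemma tendsto_RmN_of_continuousAt {ι : Type*} {l : Filter ι} {F : ι → ℝ → ℝ}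
    (hF : ∀ i, IntervalIntegrable (F i) volume (-(N : ℝ)) N) (hf : Continuous f)
    (hFf : TendstoUniformlyOn F f l (Icc (-(N : ℝ)) N)) (hm : 0 < m)
    (hcont : ContinuousAt (RmN N f) m) :
    Tendsto (fun i => RmN N (F i) m) l (𝓝 (RmN N f m)) := by
  have htail := hFf.intervalIntegral_tail hF (hf.intervalIntegrable _ _)
  rw [Metric.tendstoUniformlyOn_iff] at htail
  refine tendsto_order.2 ⟨fun a ha => ?_, fun b hb => ?_⟩
  · obtain ⟨m', ha', hmm'⟩ :=
      (((hcont.tendsto.mono_left nhdsWithin_le_nhds).eventually (lt_mem_nhds ha)).and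
        (self_mem_nhdsWithin : Ioi m ∈ 𝓝[>] m)).exists
    rw [RmN_eq_sSup] at ha'
    obtain ⟨x, hx, hax⟩ := exists_lt_of_lt_csSup (insert_nonempty _ _) ha'
    rcases hx with rfl | hx
    · exact Eventually.of_forall fun i => hax.trans_le neg_le_RmN
    filter_upwards [htail (m' - m) (sub_pos.2 hmm'),
      (hFf.tendsto_at hx.1).eventually (lt_mem_nhds hx.2.1)] with i hi hpos
    refine hax.trans_le (le_RmN_of_mem_markerSet ⟨hx.1, hpos, ?_⟩)
    have := hi x hx.1
    rw [Real.dist_eq, abs_sub_lt_iff] at this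
    linarith [hx.2.2]
  · obtain ⟨m', hb', hm'⟩ :=
      (((hcont.tendsto.mono_left nhdsWithin_le_nhds).eventually (gt_mem_nhds hb)).and
        (Ioo_mem_nhdsLT hm)).exists
    filter_upwards [htail (m - m') (sub_pos.2 hm'.2)] with i hi
    refine (RmN_le_RmN_of_integral_lt hf hm'.1 fun x hx => ?_).trans_lt hb'
    have := hi x hx
    rw [Real.dist_eq, abs_sub_lt_iff] at this
    linarith

end Marker

theorem stmt_11_general (N : ℕ) (m₀ : ℝ) (hm₀ : 0 < m₀)
    (Φ : ℝ → ℝ) (hΦc : Continuous Φ)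
    (fk : ℕ → ℝ → ℝ) (hfk : ∀ k, Continuous (fk k))
    (f : ℝ → ℝ) (hf : Continuous f)
    (hconv : TendstoUniformlyOn fk f Filter.atTop (Set.Icc (-(N : ℝ)) (N : ℝ))) :
    Filter.Tendsto (fun k => RNmoll N Φ m₀ (fk k)) Filter.atTop
      (nhds (RNmoll N Φ m₀ f)) := by
  have hΦm₀ : Continuous fun m => 1 / m₀ * Φ (-m / m₀) := by fun_prop
  have hlim : ∀ᵐ m, m ∈ Ι 0 m₀ → Tendsto (fun k => 1 / m₀ * Φ (-m / m₀) * RmN N (fk k) m)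
      atTop (𝓝 (1 / m₀ * Φ (-m / m₀) * RmN N f m)) := by
    filter_upwards [antitone_RmN.countable_not_continuousAt.ae_notMem volume] with m hm hm0
    rw [uIoc_of_le hm₀.le] at hm0
    exact (tendsto_RmN_of_continuousAt (fun k => (hfk k).intervalIntegrable _ _) hf hconv hm0.1
      (not_not.1 hm)).const_mul _
  refine intervalIntegral.tendsto_integral_filter_of_dominated_convergence
    (fun m => |1 / m₀ * Φ (-m / m₀)| * N) ?_ ?_ ?_ hlim
  · exact Eventually.of_forall fun k =>
      (hΦm₀.measurable.mul antitone_RmN.measurable).aestronglyMeasurable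
  · refine Eventually.of_forall fun k => Eventually.of_forall fun m _ => ?_
    rw [Real.norm_eq_abs, abs_mul]
    exact mul_le_mul_of_nonneg_left abs_RmN_le (abs_nonneg _)
  · exact (continuous_abs.comp hΦm₀ |>.mul continuous_const).intervalIntegrable _ _

/-- The mollified wavefront marker `f ↦ R^N_{m₀}(f)` is continuous with respect to uniform
convergence on `[-N,N]` on the class of continuous nonnegative functions: if `fₖ → f`
uniformly on `[-N,N]`, then `R^N_{m₀}(fₖ) → R^N_{m₀}(f)`. -/
theorem stmt_11 (N : ℕ) (m₀ : ℝ) (hm₀ : 0 < m₀)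
    (Φ : ℝ → ℝ) (hΦc : Continuous Φ) (hΦ0 : ∀ x, 0 ≤ Φ x)
    (hΦsupp : Function.support Φ ⊆ Set.Ioo (-1 : ℝ) 0)
    (hΦint : ∫ x : ℝ, Φ x = 1)
    (fk : ℕ → ℝ → ℝ) (hfk : ∀ k, Continuous (fk k)) (hfk0 : ∀ k x, 0 ≤ fk k x)
    (f : ℝ → ℝ) (hf : Continuous f) (hf0 : ∀ x, 0 ≤ f x)
    (hconv : TendstoUniformlyOn fk f Filter.atTop (Set.Icc (-(N : ℝ)) (N : ℝ))) :
    Filter.Tendsto (fun k => RNmoll N Φ m₀ (fk k)) Filter.atTop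
      (nhds (RNmoll N Φ m₀ f)) :=
  stmt_11_general N m₀ hm₀ Φ hΦc fk hfk f hf hconv
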